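/- For every rational number a and every polynomial f ∈ ℚ[t₁,t₂] with zero constant term (f(0,0) = 0), the quotient of the algebra B = Λ_ℚ(x,y) ⊗_ℚ ℚ[t₁,t₂] by the two-sided ideal generated by the single element (x∧y)⊗t₁ + a·(x∧y)⊗t₂ + 1⊗f is an infinite-dimensional ℚ-vector space. -/

import Mathlib

open TensorProduct

/-- The tensor product algebra `B = Λ_ℚ(x,y) ⊗_ℚ ℚ[t₁,t₂]`. -/
noncomputable abbrev stmt6B :=
  ExteriorAlgebra ℚ (Fin 2 → ℚ) ⊗[ℚ] MvPolynomial (Fin 2) ℚ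

/-- The generator `x` of the exterior algebra `Λ_ℚ(x,y)`. -/
noncomputable def stmt6x : ExteriorAlgebra ℚ (Fin 2 → ℚ) :=
  ExteriorAlgebra.ι ℚ (Pi.single 0 1)

/-- The generator `y` of the exterior algebra `Λ_ℚ(x,y)`. -/
noncomputable def stmt6y : ExteriorAlgebra ℚ (Fin 2 → ℚ) :=
  ExteriorAlgebra.ι ℚ (Pi.single 1 1)

/-- The element `(x∧y)⊗t₁ + a·(x∧y)⊗t₂ + 1⊗f` of `B`. -/
noncomputable def stmt6e (a : ℚ) (f : MvPolynomial (Fin 2) ℚ) : stmt6B :=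
  (stmt6x * stmt6y) ⊗ₜ[ℚ] MvPolynomial.X 0 +
    a • ((stmt6x * stmt6y) ⊗ₜ[ℚ] MvPolynomial.X 1) + 1 ⊗ₜ[ℚ] f

/-!
Killing `x` and `y` maps `B ⧸ (e)` onto `ℚ[t₁,t₂] ⧸ (f)`, so it suffices that the latter is
infinite-dimensional. If it were finite-dimensional, `t₁` and `t₂` would be algebraic modulo `f`:
`f` would divide a nonzero polynomial in `t₁` alone and one in `t₂` alone. In a domain the
variables of a divisor occur in the multiple, so no variable occurs in `f`; being constant with
zero constant term, `f = 0`, and then `t₁` would be algebraic over `ℚ` in `ℚ[t₁,t₂]`.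
-/

namespace MvPolynomial

variable {R σ : Type*} [CommRing R]

theorem vars_aeval_X_subset (i : σ) (p : Polynomial R) :
    ((Polynomial.aeval (X i : MvPolynomial σ R) p).vars : Set σ) ⊆ {i} := by
  rw [← mem_supported, supported_eq_adjoin_X, Set.image_singleton]
  exact Polynomial.aeval_mem_adjoin_singleton R _

theorem exists_dvd_aeval_X_of_finite_quotient [Nontrivial R] {f : MvPolynomial σ R}
    [Module.Finite R (MvPolynomial σ R ⧸ Ideal.span {f})] (i : σ) :
    ∃ p : Polynomial R, p ≠ 0 ∧ f ∣ Polynomial.aeval (X i) p := by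
  obtain ⟨p, hmonic, hp⟩ :=
    Algebra.IsIntegral.isIntegral (R := R) (Ideal.Quotient.mkₐ R (Ideal.span {f}) (X i))
  refine ⟨p, hmonic.ne_zero, ?_⟩
  rwa [← Polynomial.aeval_def, Polynomial.aeval_algHom_apply, Ideal.Quotient.mkₐ_eq_mk,
    Ideal.Quotient.eq_zero_iff_mem, Ideal.mem_span_singleton] at hp

variable [IsDomain R]

theorem vars_subset_of_dvd {p q : MvPolynomial σ R} (hq : q ≠ 0) (h : p ∣ q) :
    p.vars ⊆ q.vars := by
  obtain ⟨r, rfl⟩ := h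
  intro i hi
  rw [mem_vars_iff_degreeOf_ne_zero] at hi ⊢
  rw [degreeOf_mul_eq (left_ne_zero_of_mul hq) (right_ne_zero_of_mul hq)]
  omega

theorem vars_eq_empty_of_finite_quotient {f : MvPolynomial σ R}
    [Module.Finite R (MvPolynomial σ R ⧸ Ideal.span {f})] {i j : σ} (hij : i ≠ j) :
    f.vars = ∅ := by
  have hvars (k : σ) : (f.vars : Set σ) ⊆ {k} := by
    obtain ⟨p, hp, hdvd⟩ := exists_dvd_aeval_X_of_finite_quotient (f := f) k
    have hne : Polynomial.aeval (X k : MvPolynomial σ R) p ≠ 0 :=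
      fun h ↦ transcendental_X R k ⟨p, hp, h⟩
    exact (Finset.coe_subset.mpr (vars_subset_of_dvd hne hdvd)).trans (vars_aeval_X_subset k p)
  rw [← Finset.coe_eq_empty, Set.eq_empty_iff_forall_notMem]
  exact fun k hk ↦ hij ((hvars i hk).symm.trans (hvars j hk))

theorem not_finite_quotient_of_constantCoeff_eq_zero {f : MvPolynomial σ R}
    (hf : constantCoeff f = 0) {i j : σ} (hij : i ≠ j) :
    ¬ Module.Finite R (MvPolynomial σ R ⧸ Ideal.span {f}) := by
  intro _
  have hf0 : f = 0 := by
    rw [vars_eq_empty_iff_eq_C.mp (vars_eq_empty_of_finite_quotient (f := f) hij),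
      ← constantCoeff_eq, hf, C_0]
  obtain ⟨p, hp, hdvd⟩ := exists_dvd_aeval_X_of_finite_quotient (f := f) i
  rw [hf0, zero_dvd_iff] at hdvd
  exact transcendental_X R i ⟨p, hp, hdvd⟩

end MvPolynomial

theorem RingQuot.liftAlgHom_surjective {S A B : Type*} [CommSemiring S] [Semiring A]
    [Algebra S A] [Semiring B] [Algebra S B] {r : A → A → Prop} (φ : A →ₐ[S] B)
    (hφ : ∀ ⦃x y⦄, r x y → φ x = φ y) (hsurj : Function.Surjective φ) :
    Function.Surjective (RingQuot.liftAlgHom S ⟨φ, hφ⟩) := fun b ↦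
  let ⟨a, ha⟩ := hsurj b
  ⟨RingQuot.mkAlgHom S r a, by rw [RingQuot.liftAlgHom_mkAlgHom_apply, ha]⟩

namespace ExteriorAlgebra

variable (R M P : Type*) [CommRing R] [AddCommGroup M] [Module R M] [CommRing P] [Algebra R P]

noncomputable def augmentationTensor : ExteriorAlgebra R M ⊗[R] P →ₐ[R] P :=
  Algebra.TensorProduct.productMap ((Algebra.ofId R P).comp algebraMapInv) (AlgHom.id R P)

variable {R M P}

@[simp]
theorem algebraMapInv_ι (m : M) : algebraMapInv (ι R m) = 0 := by
  simp [algebraMapInv]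

@[simp]
theorem augmentationTensor_tmul (u : ExteriorAlgebra R M) (p : P) :
    augmentationTensor R M P (u ⊗ₜ p) = algebraMap R P (algebraMapInv u) * p :=
  Algebra.TensorProduct.productMap_apply_tmul _ _ _ _

theorem augmentationTensor_surjective : Function.Surjective (augmentationTensor R M P) :=
  fun p ↦ ⟨1 ⊗ₜ p, by simp⟩

end ExteriorAlgebra

theorem augmentationTensor_stmt6e (a : ℚ) (f : MvPolynomial (Fin 2) ℚ) :
    ExteriorAlgebra.augmentationTensor ℚ (Fin 2 → ℚ) (MvPolynomial (Fin 2) ℚ) (stmt6e a f) =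
      f := by
  simp [stmt6e, stmt6x, stmt6y]

/-- For every rational `a` and every `f ∈ ℚ[t₁,t₂]` with zero constant term, the quotient of
`B = Λ_ℚ(x,y) ⊗_ℚ ℚ[t₁,t₂]` by the two-sided ideal generated by
`(x∧y)⊗t₁ + a·(x∧y)⊗t₂ + 1⊗f` is an infinite-dimensional `ℚ`-vector space. -/
theorem stmt_6 (a : ℚ) (f : MvPolynomial (Fin 2) ℚ)
    (hf : MvPolynomial.constantCoeff f = 0) :
    ¬ FiniteDimensional ℚ (RingQuot (fun p q : stmt6B => p = stmt6e a f ∧ q = 0)) := by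
  intro _
  let π : stmt6B →ₐ[ℚ] MvPolynomial (Fin 2) ℚ ⧸ Ideal.span {f} :=
    (Ideal.Quotient.mkₐ ℚ _).comp (ExteriorAlgebra.augmentationTensor ℚ _ _)
  have hπ : ∀ ⦃p q : stmt6B⦄, p = stmt6e a f ∧ q = 0 → π p = π q := by
    rintro _ _ ⟨rfl, rfl⟩
    simp [π, augmentationTensor_stmt6e]
  have hπ_surj : Function.Surjective π :=
    (Ideal.Quotient.mkₐ_surjective ℚ _).comp ExteriorAlgebra.augmentationTensor_surjective
  exact MvPolynomial.not_finite_quotient_of_constantCoeff_eq_zero hf (i := 0) (j := 1) (by decide)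
    (.of_surjective (RingQuot.liftAlgHom ℚ ⟨π, hπ⟩).toLinearMap
      (RingQuot.liftAlgHom_surjective π hπ hπ_surj))
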